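/- For each m ≥ 1, the flat CTL formula φ_m := AG(σ_p ∧ σ_q) ∧ ⋀_{i=1}^m EG(r ∨ pᵢ) ∧ ⋀_{j=1}^m AF(qⱼ ∧ ¬r) is satisfiable, has length O(m), and every serial model of φ_m has at least m² worlds and extent at least m. -/

import Mathlib

def Serial {W : Type} (R : W → W → Prop) : Prop := ∀ w, ∃ u, R w u

def IsPath {W : Type} (R : W → W → Prop) (π : ℕ → W) : Prop := ∀ i, R (π i) (π (i+1))

structure Kripke (W : Type) where
  R : W → W → Prop
  V : ℕ → W → Prop

inductive CTL where
  | atom : ℕ → CTL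
  | neg  : CTL → CTL
  | and  : CTL → CTL → CTL
  | or   : CTL → CTL → CTL
  | AX : CTL → CTL
  | EX : CTL → CTL
  | AF : CTL → CTL
  | EF : CTL → CTL
  | AG : CTL → CTL
  | EG : CTL → CTL
  | AU : CTL → CTL → CTL
  | EU : CTL → CTL → CTL
  | AR : CTL → CTL → CTL
  | ER : CTL → CTL → CTL
deriving DecidableEq

def sat {W : Type} (K : Kripke W) : CTL → W → Prop
  | .atom p, w => K.V p w
  | .neg φ, w => ¬ sat K φ w
  | .and φ ψ, w => sat K φ w ∧ sat K ψ w
  | .or φ ψ, w => sat K φ w ∨ sat K ψ w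
  | .AX φ, w => ∀ π : ℕ → W, IsPath K.R π → π 0 = w → sat K φ (π 1)
  | .EX φ, w => ∃ π : ℕ → W, IsPath K.R π ∧ π 0 = w ∧ sat K φ (π 1)
  | .AF φ, w => ∀ π : ℕ → W, IsPath K.R π → π 0 = w → ∃ i, sat K φ (π i)
  | .EF φ, w => ∃ π : ℕ → W, IsPath K.R π ∧ π 0 = w ∧ ∃ i, sat K φ (π i)
  | .AG φ, w => ∀ π : ℕ → W, IsPath K.R π → π 0 = w → ∀ i, sat K φ (π i)
  | .EG φ, w => ∃ π : ℕ → W, IsPath K.R π ∧ π 0 = w ∧ ∀ i, sat K φ (π i)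
  | .AU φ ψ, w => ∀ π : ℕ → W, IsPath K.R π → π 0 = w →
      ∃ i, sat K ψ (π i) ∧ ∀ j, j < i → sat K φ (π j)
  | .EU φ ψ, w => ∃ π : ℕ → W, IsPath K.R π ∧ π 0 = w ∧
      ∃ i, sat K ψ (π i) ∧ ∀ j, j < i → sat K φ (π j)
  | .AR φ ψ, w => ∀ π : ℕ → W, IsPath K.R π → π 0 = w →
      ∀ i, sat K ψ (π i) ∨ ∃ j, j < i ∧ sat K φ (π j)
  | .ER φ ψ, w => ∃ π : ℕ → W, IsPath K.R π ∧ π 0 = w ∧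
      ∀ i, sat K ψ (π i) ∨ ∃ j, j < i ∧ sat K φ (π j)

def CTL.len : CTL → ℕ
  | .atom _ => 1
  | .neg φ => φ.len + 1
  | .and φ ψ => φ.len + ψ.len + 1
  | .or φ ψ => φ.len + ψ.len + 1
  | .AX φ => φ.len + 1
  | .EX φ => φ.len + 1
  | .AF φ => φ.len + 1
  | .EF φ => φ.len + 1
  | .AG φ => φ.len + 1
  | .EG φ => φ.len + 1
  | .AU φ ψ => φ.len + ψ.len + 1
  | .EU φ ψ => φ.len + ψ.len + 1
  | .AR φ ψ => φ.len + ψ.len + 1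
  | .ER φ ψ => φ.len + ψ.len + 1

def CTL.td : CTL → ℕ
  | .atom _ => 0
  | .neg φ => φ.td
  | .and φ ψ => max φ.td ψ.td
  | .or φ ψ => max φ.td ψ.td
  | .AX φ => φ.td + 1
  | .EX φ => φ.td + 1
  | .AF φ => φ.td + 1
  | .EF φ => φ.td + 1
  | .AG φ => φ.td + 1
  | .EG φ => φ.td + 1
  | .AU φ ψ => max φ.td ψ.td + 1
  | .EU φ ψ => max φ.td ψ.td + 1
  | .AR φ ψ => max φ.td ψ.td + 1
  | .ER φ ψ => max φ.td ψ.td + 1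

/-- The formula uses only the temporal operators `AG`, `EG`, `AF` and `EF`
(i.e. `T` contains `{AG, AF}` together with the duals). -/
def OnlyGF : CTL → Prop
  | .atom _ => True
  | .neg φ => OnlyGF φ
  | .and φ ψ => OnlyGF φ ∧ OnlyGF ψ
  | .or φ ψ => OnlyGF φ ∧ OnlyGF ψ
  | .AG φ => OnlyGF φ
  | .EG φ => OnlyGF φ
  | .AF φ => OnlyGF φ
  | .EF φ => OnlyGF φ
  | _ => False


/-!
`σ_p` stays linear in `m` by using carries `c_k` that mean "some `p_i` with `i ≤ k` holds":
`p_k → c_k`, `c_k → c_{k+1}` and `¬(c_k ∧ p_{k+1})`.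

Along the path witnessing `EG (r ∨ p_i)`, every `AF (q_j ∧ ¬r)` is fulfilled at a world where
`r` fails, hence where both `p_i` and `q_j` hold. Since `AG (σ_p ∧ σ_q)` lets a reachable world
carry at most one `p` and one `q`, these worlds are pairwise distinct for the `m²` pairs `(i, j)`;
for a fixed `i` they lie on one path, together with the root, where `r` holds.

A model: from the root, step into any of `m` rows and walk along row `i` through the worlds
`(i, 0), (i, 1), …`, where `(i, j)` is labelled `p_i` and `q_j`.
-/

namespace CTL

def top : CTL := or (atom 0) (neg (atom 0))

def imp (φ ψ : CTL) : CTL := or (neg φ) ψ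

def conj (l : List CTL) : CTL := l.foldr CTL.and top

@[simp] lemma len_imp (φ ψ : CTL) : (imp φ ψ).len = φ.len + ψ.len + 2 := by
  simp only [imp, len]; omega

@[simp] lemma td_imp (φ ψ : CTL) : (imp φ ψ).td = max φ.td ψ.td := rfl

@[simp] lemma onlyGF_imp (φ ψ : CTL) : OnlyGF (imp φ ψ) ↔ OnlyGF φ ∧ OnlyGF ψ := Iff.rfl

@[simp] lemma onlyGF_conj (l : List CTL) : OnlyGF (conj l) ↔ ∀ ψ ∈ l, OnlyGF ψ := by
  induction l with
  | nil => exact iff_of_true ⟨trivial, trivial⟩ (by simp)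
  | cons φ l ih => simp [conj, OnlyGF, ← ih]

@[simp] lemma td_conj_le_iff (l : List CTL) (n : ℕ) : (conj l).td ≤ n ↔ ∀ ψ ∈ l, ψ.td ≤ n := by
  induction l with
  | nil => simp [conj, top, td]
  | cons φ l ih => simp [conj, td, ← ih]

lemma len_conj (l : List CTL) : (conj l).len = (l.map len).sum + l.length + 4 := by
  induction l with
  | nil => rfl
  | cons φ l ih => simp only [conj, List.foldr, len] at ih ⊢; simp; omega

end CTL

open CTL

section Semantics

variable {W : Type} {K : Kripke W}

@[simp] lemma sat_imp {φ ψ : CTL} {w : W} : sat K (imp φ ψ) w ↔ (sat K φ w → sat K ψ w) := by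
  simp only [imp, sat]; tauto

@[simp] lemma sat_conj {l : List CTL} {w : W} : sat K (conj l) w ↔ ∀ ψ ∈ l, sat K ψ w := by
  induction l with
  | nil => simp [conj, top, sat, em]
  | cons φ l ih => simp [conj, sat, ← ih]

end Semantics

def atMostOne (p c : ℕ → ℕ) (m : ℕ) : CTL :=
  conj ((List.range m).map (fun k => imp (atom (p k)) (atom (c k))) ++
    (List.range (m - 1)).map fun k =>
      and (imp (atom (c k)) (atom (c (k + 1)))) (neg (and (atom (c k)) (atom (p (k + 1))))))

lemma onlyGF_atMostOne (p c : ℕ → ℕ) (m : ℕ) : OnlyGF (atMostOne p c m) := by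
  simp only [atMostOne, onlyGF_conj, List.forall_mem_append, List.forall_mem_map]
  simp [OnlyGF]

lemma td_atMostOne (p c : ℕ → ℕ) (m : ℕ) : (atMostOne p c m).td = 0 := by
  rw [← Nat.le_zero, atMostOne, td_conj_le_iff, List.forall_mem_append, List.forall_mem_map,
    List.forall_mem_map]
  simp [td]

lemma len_atMostOne_le (p c : ℕ → ℕ) (m : ℕ) : (atMostOne p c m).len ≤ 15 * m + 4 := by
  simp [atMostOne, len_conj, Function.comp_def, len, List.map_const']
  omega

section Semantics

variable {W : Type} {K : Kripke W}

lemma sat_atMostOne_iff {p c : ℕ → ℕ} {m : ℕ} {v : W} :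
    sat K (atMostOne p c m) v ↔ (∀ k < m, K.V (p k) v → K.V (c k) v) ∧
      ∀ k, k + 1 < m → (K.V (c k) v → K.V (c (k + 1)) v) ∧ ¬(K.V (c k) v ∧ K.V (p (k + 1)) v) := by
  simp [atMostOne, sat, or_imp, forall_and, Nat.lt_sub_iff_add_lt]

lemma eq_of_sat_atMostOne {p c : ℕ → ℕ} {m i i' : ℕ} {v : W} (h : sat K (atMostOne p c m) v)
    (hi : i < m) (hi' : i' < m) (hpi : K.V (p i) v) (hpi' : K.V (p i') v) : i = i' := by
  obtain ⟨hstart, hstep⟩ := sat_atMostOne_iff.1 h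
  have not_both : ∀ a b, a < b → b < m → K.V (p a) v → ¬ K.V (p b) v := by
    intro a b hab hbm hpa hpb
    have carry : ∀ k, a ≤ k → k < b → K.V (c k) v := by
      intro k hak
      induction k, hak using Nat.le_induction with
      | base => exact fun _ => hstart a (hab.trans hbm) hpa
      | succ k _ ih => exact fun hkb => (hstep k (by omega)).1 (ih (by omega))
    obtain ⟨b, rfl⟩ : ∃ k, b = k + 1 := ⟨b - 1, by omega⟩
    exact (hstep b hbm).2 ⟨carry b (by omega) (by omega), hpb⟩
  by_contra hne
  rcases Nat.lt_or_gt_of_ne hne with hlt | hlt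
  · exact not_both i i' hlt hi' hpi hpi'
  · exact not_both i' i hlt hi hpi' hpi

lemma sat_atMostOne_of_carry {p c : ℕ → ℕ} {m : ℕ} {v : W}
    (hp : ∀ i i', K.V (p i) v → K.V (p i') v → i = i')
    (hc : ∀ k, K.V (c k) v ↔ ∃ i ≤ k, K.V (p i) v) : sat K (atMostOne p c m) v := by
  refine sat_atMostOne_iff.2 ⟨fun k _ hpk => (hc k).2 ⟨k, le_rfl, hpk⟩, fun k _ => ⟨?_, ?_⟩⟩
  · rw [hc, hc]
    exact fun ⟨i, hik, hpi⟩ => ⟨i, hik.trans k.le_succ, hpi⟩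
  · rw [hc]
    rintro ⟨⟨i, hik, hpi⟩, hpk⟩
    exact absurd (hp _ _ hpi hpk) (by omega)

end Semantics

def atomR : ℕ := 0
def atomP (i : ℕ) : ℕ := 4 * i + 1
def atomQ (j : ℕ) : ℕ := 4 * j + 2
def carryP (k : ℕ) : ℕ := 4 * k + 3
def carryQ (k : ℕ) : ℕ := 4 * k + 4

-- The conjunct `r` separates the root from the worlds where `q_j ∧ ¬r` holds, which gives the
-- `(m + 1)`-st distinct world of the extent bound.
def phi (m : ℕ) : CTL :=
  conj ([atom atomR, AG (and (atMostOne atomP carryP m) (atMostOne atomQ carryQ m))] ++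
    (List.range m).map (fun i => EG (or (atom atomR) (atom (atomP i)))) ++
    (List.range m).map fun j => AF (and (atom (atomQ j)) (neg (atom atomR))))

lemma onlyGF_phi (m : ℕ) : OnlyGF (phi m) := by
  simp only [phi, onlyGF_conj, List.forall_mem_append, List.forall_mem_map]
  simp [OnlyGF, onlyGF_atMostOne]

lemma td_phi (m : ℕ) : (phi m).td ≤ 1 := by
  simp only [phi, td_conj_le_iff, List.forall_mem_append, List.forall_mem_map]
  simp [td, td_atMostOne]

lemma len_phi_le (m : ℕ) : (phi m).len ≤ 41 * m + 17 := by
  have := len_atMostOne_le atomP carryP m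
  have := len_atMostOne_le atomQ carryQ m
  simp [phi, len_conj, Function.comp_def, len, List.map_const']
  omega

section Semantics

variable {W : Type} {K : Kripke W}

lemma sat_phi_iff {m : ℕ} {w : W} :
    sat K (phi m) w ↔ K.V atomR w ∧
      (∀ π, IsPath K.R π → π 0 = w → ∀ t,
        sat K (atMostOne atomP carryP m) (π t) ∧ sat K (atMostOne atomQ carryQ m) (π t)) ∧
      (∀ i < m, ∃ π, IsPath K.R π ∧ π 0 = w ∧ ∀ t, K.V atomR (π t) ∨ K.V (atomP i) (π t)) ∧
      ∀ j < m, ∀ π, IsPath K.R π → π 0 = w → ∃ t, K.V (atomQ j) (π t) ∧ ¬ K.V atomR (π t) := by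
  simp only [phi, sat_conj, List.forall_mem_append, List.forall_mem_map, List.forall_mem_cons,
    List.mem_range]
  simp [sat, and_assoc]

end Semantics

section LowerBound

variable {W : Type} {K : Kripke W} {m : ℕ}

def IsCell (K : Kripke W) (m i j : ℕ) (v : W) : Prop :=
  ¬ K.V atomR v ∧ K.V (atomP i) v ∧ K.V (atomQ j) v ∧
    sat K (atMostOne atomP carryP m) v ∧ sat K (atMostOne atomQ carryQ m) v

lemma IsCell.eq {i j i' j' : ℕ} {v : W} (h : IsCell K m i j v) (h' : IsCell K m i' j' v)
    (hi : i < m) (hj : j < m) (hi' : i' < m) (hj' : j' < m) : i = i' ∧ j = j' :=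
  ⟨eq_of_sat_atMostOne h.2.2.2.1 hi hi' h.2.1 h'.2.1,
    eq_of_sat_atMostOne h.2.2.2.2 hj hj' h.2.2.1 h'.2.2.1⟩

lemma exists_path_cells {w : W} (h : sat K (phi m) w) {i : ℕ} (hi : i < m) :
    ∃ π, IsPath K.R π ∧ π 0 = w ∧ ∃ t : ℕ → ℕ, ∀ j < m, IsCell K m i j (π (t j)) := by
  obtain ⟨-, hσ, hEG, hAF⟩ := sat_phi_iff.1 h
  obtain ⟨π, hπ, hπ0, hrp⟩ := hEG i hi
  choose! t ht using fun j (hj : j < m) => hAF j hj π hπ hπ0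
  refine ⟨π, hπ, hπ0, t, fun j hj => ?_⟩
  obtain ⟨hq, hr⟩ := ht j hj
  exact ⟨hr, (hrp _).resolve_left hr, hq, hσ π hπ hπ0 _⟩

lemma sq_le_card_of_sat_phi [Fintype W] {w : W} (h : sat K (phi m) w) :
    m ^ 2 ≤ Fintype.card W := by
  choose π _ _ t ht using fun i : Fin m => exists_path_cells h i.2
  have hinj : Function.Injective fun ij : Fin m × Fin m => π ij.1 (t ij.1 ij.2) := by
    rintro ⟨i, j⟩ ⟨i', j'⟩ hv
    simp only at hv
    have hcell' := ht i' j' j'.2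
    rw [← hv] at hcell'
    obtain ⟨hii', hjj'⟩ := (ht i j j.2).eq hcell' i.2 j.2 i'.2 j'.2
    exact Prod.ext (Fin.ext hii') (Fin.ext hjj')
  simpa [sq] using Fintype.card_le_of_injective _ hinj

lemma exists_path_injective_of_sat_phi (hm : 0 < m) {w : W} (h : sat K (phi m) w) :
    ∃ π : ℕ → W, IsPath K.R π ∧ π 0 = w ∧
      ∃ f : Fin (m + 1) → ℕ, Function.Injective (fun i => π (f i)) := by
  have hr : K.V atomR w := (sat_phi_iff.1 h).1
  obtain ⟨π, hπ, hπ0, t, ht⟩ := exists_path_cells h hm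
  refine ⟨π, hπ, hπ0, Fin.cons 0 fun j => t j, ?_⟩
  have root_ne : ∀ j : Fin m, w ≠ π (t j) := fun j hw => (ht j j.2).1 (hw ▸ hr)
  intro a b hab
  cases a using Fin.cases with
  | zero =>
    cases b using Fin.cases with
    | zero => rfl
    | succ j' => simp only [Fin.cons_zero, Fin.cons_succ, hπ0] at hab; exact absurd hab (root_ne j')
  | succ j =>
    cases b using Fin.cases with
    | zero => simp only [Fin.cons_zero, Fin.cons_succ, hπ0] at hab; exact absurd hab.symm (root_ne j)
    | succ j' =>
      simp only [Fin.cons_succ] at hab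
      have hcell := ht j' j'.2
      rw [← hab] at hcell
      exact congrArg Fin.succ (Fin.ext ((ht j j.2).eq hcell hm j.2 hm j'.2).2)

end LowerBound

section Model

def gridModel (m : ℕ) : Kripke (Option (ℕ × ℕ)) where
  R
    | none, v => ∃ i < m, v = some (i, 0)
    | some (i, j), v => v = some (i, j + 1)
  V n
    | none => n = atomR
    | some (i, j) => n = atomP i ∨ n = atomQ j ∨ (∃ k, i ≤ k ∧ n = carryP k) ∨
        ∃ k, j ≤ k ∧ n = carryQ k

section Valuation

variable {m i j k : ℕ}

@[simp] lemma gridModel_V_none {n : ℕ} : (gridModel m).V n none ↔ n = atomR := Iff.rfl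

@[simp] lemma gridModel_V_atomR : ¬ (gridModel m).V atomR (some (i, j)) := by
  rintro (h | h | ⟨x, -, h⟩ | ⟨x, -, h⟩) <;> simp [atomR, atomP, atomQ, carryP, carryQ] at h

@[simp] lemma gridModel_V_atomP : (gridModel m).V (atomP k) (some (i, j)) ↔ k = i := by
  simp only [gridModel, atomP, atomQ, carryP, carryQ]
  constructor
  · rintro (h | h | ⟨x, hx, h⟩ | ⟨x, hx, h⟩) <;> omega
  · intro h; simp [h]

@[simp] lemma gridModel_V_atomQ : (gridModel m).V (atomQ k) (some (i, j)) ↔ k = j := by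
  simp only [gridModel, atomP, atomQ, carryP, carryQ]
  constructor
  · rintro (h | h | ⟨x, hx, h⟩ | ⟨x, hx, h⟩) <;> omega
  · intro h; simp [h]

@[simp] lemma gridModel_V_carryP : (gridModel m).V (carryP k) (some (i, j)) ↔ i ≤ k := by
  simp only [gridModel, atomP, atomQ, carryP, carryQ]
  constructor
  · rintro (h | h | ⟨x, hx, h⟩ | ⟨x, hx, h⟩) <;> omega
  · intro h; simp [h]

@[simp] lemma gridModel_V_carryQ : (gridModel m).V (carryQ k) (some (i, j)) ↔ j ≤ k := by
  simp only [gridModel, atomP, atomQ, carryP, carryQ]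
  constructor
  · rintro (h | h | ⟨x, hx, h⟩ | ⟨x, hx, h⟩) <;> omega
  · intro h; simp [h]

end Valuation

lemma serial_gridModel {m : ℕ} (hm : 0 < m) : Serial (gridModel m).R
  | none => ⟨some (0, 0), 0, hm, rfl⟩
  | some (i, j) => ⟨some (i, j + 1), rfl⟩

lemma eq_of_isPath_gridModel {m : ℕ} {π : ℕ → Option (ℕ × ℕ)} (hπ : IsPath (gridModel m).R π)
    (h0 : π 0 = none) : ∃ i < m, ∀ t, π (t + 1) = some (i, t) := by
  obtain ⟨i, hi, h1⟩ : ∃ i < m, π 1 = some (i, 0) := by simpa [h0, gridModel] using hπ 0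
  refine ⟨i, hi, fun t => ?_⟩
  induction t with
  | zero => exact h1
  | succ t ih => simpa [ih, gridModel] using hπ (t + 1)

lemma sat_atMostOne_gridModel {m : ℕ} (v : Option (ℕ × ℕ)) :
    sat (gridModel m) (atMostOne atomP carryP m) v ∧
      sat (gridModel m) (atMostOne atomQ carryQ m) v := by
  rcases v with _ | ⟨i, j⟩
  · constructor <;> apply sat_atMostOne_of_carry <;>
      simp [atomR, atomP, atomQ, carryP, carryQ]
  · constructor <;> apply sat_atMostOne_of_carry <;> simp +contextual

lemma sat_phi_gridModel (m : ℕ) : sat (gridModel m) (phi m) none := by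
  refine sat_phi_iff.2 ⟨rfl, fun π _ _ t => sat_atMostOne_gridModel (π t), fun i hi => ?_, ?_⟩
  · refine ⟨fun t => t.casesOn none fun t => some (i, t), ?_, rfl, ?_⟩
    · rintro (_ | t)
      exacts [⟨i, hi, rfl⟩, rfl]
    · rintro (_ | t) <;> simp
  · intro j _ π hπ h0
    obtain ⟨i, -, hrow⟩ := eq_of_isPath_gridModel hπ h0
    exact ⟨j + 1, by simp [hrow]⟩

end Model

/-- For each `m ≥ 1` there is a satisfiable flat CTL formula over `{AG, EG, AF}` of
length `O(m)` (the formula `AG(σ_p ∧ σ_q) ∧ ⋀ᵢ EG(r ∨ pᵢ) ∧ ⋀ⱼ AF(qⱼ ∧ ¬r)`)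
such that every rooted serial model has at least `m²` worlds and extent at least `m`
(some path visits at least `m + 1` distinct worlds). -/
theorem flat_AG_EG_AF_quadratic_lower_bound :
    ∃ C : ℕ, 0 < C ∧ ∀ m : ℕ, 1 ≤ m → ∃ φ : CTL,
      OnlyGF φ ∧ φ.td ≤ 1 ∧ φ.len ≤ C * m ∧
      (∃ (W : Type) (K : Kripke W) (w : W), Serial K.R ∧ sat K φ w) ∧
      (∀ (W : Type) (inst : Fintype W) (K : Kripke W) (w : W),
        Serial K.R → sat K φ w → m ^ 2 ≤ @Fintype.card W inst) ∧
      (∀ (W : Type) (K : Kripke W) (w : W), Serial K.R → sat K φ w →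
        ∃ π : ℕ → W, IsPath K.R π ∧ π 0 = w ∧
          ∃ f : Fin (m + 1) → ℕ, Function.Injective (fun i => π (f i))) := by
  refine ⟨58, by norm_num, fun m hm => ⟨phi m, onlyGF_phi m, td_phi m, ?_, ?_, ?_, ?_⟩⟩
  · linarith [len_phi_le m]
  · exact ⟨_, gridModel m, none, serial_gridModel hm, sat_phi_gridModel m⟩
  · exact fun W _ K w _ h => sq_le_card_of_sat_phi h
  · exact fun W K w _ h => exists_path_injective_of_sat_phi hm h
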